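/- With respect to the Fischer-type inner product on degree-d polynomial vector fields, the adjoint of the homological operator ad_N h(xi) = Dh(xi) N xi - N h(xi) is ad_{N^*}, where N^* is the transpose of N. -/

import Mathlib

open MvPolynomial Matrix

noncomputable def Pnd (n d : ℕ) : Submodule ℝ (MvPolynomial (Fin n) ℝ) :=
  homogeneousSubmodule (Fin n) ℝ d

noncomputable def Fnd (n d : ℕ) : Submodule ℝ (Fin n → MvPolynomial (Fin n) ℝ) :=
  Submodule.pi Set.univ fun _ => homogeneousSubmodule (Fin n) ℝ d

noncomputable def divL (n : ℕ) : (Fin n → MvPolynomial (Fin n) ℝ) →ₗ[ℝ] MvPolynomial (Fin n) ℝ :=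
  ∑ i, (pderiv i).toLinearMap ∘ₗ LinearMap.proj i

noncomputable def adL {n : ℕ} (N : Matrix (Fin n) (Fin n) ℝ) :
    (Fin n → MvPolynomial (Fin n) ℝ) →ₗ[ℝ] (Fin n → MvPolynomial (Fin n) ℝ) :=
  LinearMap.pi fun i =>
    (∑ j, (LinearMap.mulLeft ℝ (∑ k, N j k • (X k : MvPolynomial (Fin n) ℝ))) ∘ₗ
        (pderiv j).toLinearMap ∘ₗ LinearMap.proj i)
      - ∑ j, N i j • LinearMap.proj j

noncomputable def diffOp {n : ℕ} (m : Fin n →₀ ℕ) :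
    Module.End ℝ (MvPolynomial (Fin n) ℝ) :=
  (List.finRange n).foldr
    (fun i f => (((pderiv i).toLinearMap : Module.End ℝ (MvPolynomial (Fin n) ℝ)) ^ (m i)) * f) 1

/-- Fischer inner product `⟨p,q⟩ = p(∂_ξ) q(ξ) |_{ξ=0}`. -/
noncomputable def fischer {n : ℕ} (p q : MvPolynomial (Fin n) ℝ) : ℝ :=
  constantCoeff (∑ m ∈ p.support, p.coeff m • (diffOp m q))

noncomputable def fischerV {n : ℕ} (p q : Fin n → MvPolynomial (Fin n) ℝ) : ℝ :=
  ∑ i, fischer (p i) (q i)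

noncomputable def radialL (n : ℕ) : MvPolynomial (Fin n) ℝ →ₗ[ℝ] (Fin n → MvPolynomial (Fin n) ℝ) :=
  LinearMap.pi fun i => LinearMap.mulLeft ℝ (X i)

noncomputable def Und (n d : ℕ) : Submodule ℝ (Fin n → MvPolynomial (Fin n) ℝ) :=
  Submodule.map (radialL n) (Pnd n (d - 1))

def N3 : Matrix (Fin 3) (Fin 3) ℝ := !![0,1,0; 0,0,1; 0,0,0]

noncomputable def B3 : MvPolynomial (Fin 3) ℝ := 2 * X 0 * X 2 - X 1 ^ 2

/-! In the monomial basis the Fischer product is diagonal, `⟨p, q⟩ = ∑ₘ m! pₘ qₘ`, so it is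
symmetric and multiplication by `ξⱼ` is adjoint to `∂ⱼ`. Hence `ξₖ ∂ⱼ` is adjoint to `ξⱼ ∂ₖ`, which
turns the transport term `∑ⱼ (N ξ)ⱼ ∂ⱼ` of `ad_N` into that of `ad_{Nᵀ}`, while `h ↦ N h` is
adjoint to `h ↦ Nᵀ h`. -/

section

variable {n : ℕ}

lemma coeff_pderiv_pow (i : Fin n) (k : ℕ) (q : MvPolynomial (Fin n) ℝ) (m : Fin n →₀ ℕ) :
    coeff m ((((pderiv i).toLinearMap : Module.End ℝ (MvPolynomial (Fin n) ℝ)) ^ k) q)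
      = ((m i + k).descFactorial k : ℝ) * coeff (m + Finsupp.single i k) q := by
  induction k generalizing q with
  | zero => simp
  | succ k ih =>
    rw [pow_succ, Module.End.mul_apply, ih]
    show _ * coeff _ (pderiv i q) = _
    rw [coeff_pderiv, add_assoc, ← Finsupp.single_add, Finsupp.add_apply,
      Finsupp.single_eq_same, ← add_assoc (m i), Nat.succ_descFactorial_succ]
    push_cast
    ring

lemma coeff_foldr_pderiv_pow (k : Fin n →₀ ℕ) {L : List (Fin n)} (hL : L.Nodup)
    (q : MvPolynomial (Fin n) ℝ) (m : Fin n →₀ ℕ) :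
    coeff m ((L.foldr (fun i f =>
        (((pderiv i).toLinearMap : Module.End ℝ (MvPolynomial (Fin n) ℝ)) ^ k i) * f) 1) q)
      = (L.map fun j => ((m j + k j).descFactorial (k j) : ℝ)).prod
          * coeff (m + (L.map fun j => Finsupp.single j (k j)).sum) q := by
  induction L generalizing m with
  | nil => simp
  | cons i L ih =>
    obtain ⟨hi, hL⟩ := List.nodup_cons.mp hL
    have hL_off : ∀ j ∈ L, (m + Finsupp.single i (k i)) j = m j := fun j hj => by
      rw [Finsupp.add_apply, Finsupp.single_eq_of_ne (ne_of_mem_of_not_mem hj hi), add_zero]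
    rw [List.foldr_cons, Module.End.mul_apply, coeff_pderiv_pow, ih hL,
      List.map_congr_left fun j hj => by rw [hL_off j hj]]
    simp only [List.map_cons, List.prod_cons, List.sum_cons, add_assoc]
    ring

lemma constantCoeff_diffOp (k : Fin n →₀ ℕ) (q : MvPolynomial (Fin n) ℝ) :
    constantCoeff (diffOp k q) = (∏ i, ((k i).factorial : ℝ)) * coeff k q := by
  rw [constantCoeff_eq, diffOp, coeff_foldr_pderiv_pow k (List.nodup_finRange n)]
  simp only [Finsupp.coe_zero, Pi.zero_apply, zero_add, Nat.descFactorial_self]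
  rw [← Fin.prod_univ_def fun j => ((k j).factorial : ℝ),
    ← Fin.sum_univ_def fun j => Finsupp.single j (k j), Finsupp.univ_sum_single]

lemma fischer_eq_sum (p q : MvPolynomial (Fin n) ℝ) {S : Finset (Fin n →₀ ℕ)}
    (hS : p.support ⊆ S) :
    fischer p q = ∑ m ∈ S, (∏ i, ((m i).factorial : ℝ)) * coeff m p * coeff m q := by
  rw [fischer, map_sum, ← Finset.sum_subset hS fun m _ hm => by
    rw [notMem_support_iff.mp hm, mul_zero, zero_mul]]
  refine Finset.sum_congr rfl fun m _ => ?_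
  rw [smul_eq_C_mul, map_mul, constantCoeff_C, constantCoeff_diffOp]
  ring

lemma fischer_comm (p q : MvPolynomial (Fin n) ℝ) : fischer p q = fischer q p := by
  rw [fischer_eq_sum p q Finset.subset_union_left, fischer_eq_sum q p Finset.subset_union_right]
  exact Finset.sum_congr rfl fun m _ => by ring

lemma prod_factorial_single_add (m : Fin n →₀ ℕ) (j : Fin n) :
    ∏ i, (((Finsupp.single j 1 + m : Fin n →₀ ℕ) i).factorial : ℝ)
      = (m j + 1) * ∏ i, ((m i).factorial : ℝ) := by
  rw [← Finset.mul_prod_erase _ _ (Finset.mem_univ j),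
    ← Finset.mul_prod_erase _ (fun i => ((m i).factorial : ℝ)) (Finset.mem_univ j),
    Finset.prod_congr rfl fun i hi => by
      rw [Finsupp.add_apply, Finsupp.single_eq_of_ne (Finset.ne_of_mem_erase hi), zero_add],
    Finsupp.add_apply, Finsupp.single_eq_same, add_comm 1, Nat.factorial_succ]
  push_cast
  ring

lemma fischer_X_mul (j : Fin n) (p q : MvPolynomial (Fin n) ℝ) :
    fischer (X j * p) q = fischer p (pderiv j q) := by
  rw [fischer_eq_sum _ q (support_X_mul j p).subset, fischer_eq_sum p _ subset_rfl,
    Finset.sum_map]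
  refine Finset.sum_congr rfl fun m _ => ?_
  rw [addLeftEmbedding_apply, coeff_X_mul, coeff_pderiv, prod_factorial_single_add,
    add_comm (Finsupp.single j 1)]
  ring

lemma fischer_X_mul_pderiv (a b : MvPolynomial (Fin n) ℝ) (j k : Fin n) :
    fischer a (X k * pderiv j b) = fischer (X j * pderiv k a) b := by
  rw [fischer_comm, fischer_X_mul, fischer_comm, fischer_X_mul]

noncomputable def fischerₗ (p : MvPolynomial (Fin n) ℝ) : MvPolynomial (Fin n) ℝ →ₗ[ℝ] ℝ :=
  lcoeff ℝ 0 ∘ₗ ∑ m ∈ p.support, p.coeff m • diffOp m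

lemma fischerₗ_apply (p q : MvPolynomial (Fin n) ℝ) : fischerₗ p q = fischer p q := by
  simp [fischerₗ, fischer, constantCoeff_eq]

lemma fischerV_comm (p q : Fin n → MvPolynomial (Fin n) ℝ) : fischerV p q = fischerV q p :=
  Finset.sum_congr rfl fun i _ => fischer_comm (p i) (q i)

lemma adL_apply (N : Matrix (Fin n) (Fin n) ℝ) (q : Fin n → MvPolynomial (Fin n) ℝ) (i : Fin n) :
    adL N q i = ∑ j, (∑ k, N j k • X k) * pderiv j (q i) - ∑ j, N i j • q j := by
  simp [adL]

lemma fischerV_adL (N : Matrix (Fin n) (Fin n) ℝ) (p q : Fin n → MvPolynomial (Fin n) ℝ) :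
    fischerV p (adL N q) = ∑ i, (∑ j, ∑ k, N j k * fischer (p i) (X k * pderiv j (q i))
      - ∑ j, N i j * fischer (p i) (q j)) := by
  simp only [fischerV, adL_apply, ← fischerₗ_apply, map_sub, map_sum, Finset.sum_mul,
    smul_mul_assoc, map_smul, smul_eq_mul]

end

theorem adN_adjoint_general (n : ℕ) (N : Matrix (Fin n) (Fin n) ℝ)
    (p q : Fin n → MvPolynomial (Fin n) ℝ) :
    fischerV p (adL N q) = fischerV (adL Nᵀ p) q := by
  rw [fischerV_comm _ q, fischerV_adL, fischerV_adL, Finset.sum_sub_distrib,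
    Finset.sum_sub_distrib]
  congr 1
  · refine Finset.sum_congr rfl fun i _ => ?_
    rw [Finset.sum_comm]
    refine Finset.sum_congr rfl fun j _ => Finset.sum_congr rfl fun k _ => ?_
    rw [transpose_apply, fischer_X_mul_pderiv, fischer_comm]
  · rw [Finset.sum_comm]
    refine Finset.sum_congr rfl fun i _ => Finset.sum_congr rfl fun j _ => ?_
    rw [transpose_apply, fischer_comm]

theorem adN_adjoint (n d : ℕ) (N : Matrix (Fin n) (Fin n) ℝ)
    (p q : Fin n → MvPolynomial (Fin n) ℝ) (hp : p ∈ Fnd n d) (hq : q ∈ Fnd n d) :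
    fischerV p (adL N q) = fischerV (adL Nᵀ p) q :=
  adN_adjoint_general n N p q
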